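/- arXiv:1306.0101 — 5 statements merged into one kernel-verified Lean document; each statement's English description precedes it below -/
import Mathlib

section
/- Let λ, μ, ρ, ν be real numbers with μ − λ = ν − ρ = δ and δ ∉ {1/2, 1, 3/2, 2, 5/2}. Suppose there exist nonzero real numbers τ₀, τ₁, τ₂, τ₃, τ₄, τ₅ satisfying the six intertwining equations τ₀·β₀³(λ,μ) = τ₃·β₀³(ρ,ν), τ₀·β₀⁴(λ,μ) = τ₄·β₀⁴(ρ,ν), τ₀·β₀⁵(λ,μ) = τ₅·β₀⁵(ρ,ν), τ₁·β₁⁴(λ,μ) = τ₄·β₁⁴(ρ,ν), τ₁·β₁⁵(λ,μ) = τ₅·β₁⁵(ρ,ν), τ₂·β₂⁵(λ,μ) = τ₅·β₂⁵(ρ,ν). Then λ = ρ or ρ + μ = 1/2. (This is the algebraic content of Theorem 3.1(ii): for k ≥ 5/2 and nonresonant δ, the K(1)-module of differential operators of order k from λ-densities to μ-densities on the supercircle S^{1|1} is isomorphic only to itself and to its adjoint module.) -/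
/-- β₀³(λ,μ) = −λ(2δ+2λ−1)/(2δ−2) where δ = μ−λ. -/
noncomputable def b03 (l m : ℝ) : ℝ :=
  -(l * (2 * (m - l) + 2 * l - 1)) / (2 * (m - l) - 2)

/-- β₀⁴(λ,μ) = −3λ(2δ+2λ−1)/((2δ−1)(2δ−4)). -/
noncomputable def b04 (l m : ℝ) : ℝ :=
  -(3 * l * (2 * (m - l) + 2 * l - 1)) / ((2 * (m - l) - 1) * (2 * (m - l) - 4))

/-- β₁⁴(λ,μ) = −(2δ+4λ−1)/(2(2δ−3)). -/
noncomputable def b14 (l m : ℝ) : ℝ :=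
  -(2 * (m - l) + 4 * l - 1) / (2 * (2 * (m - l) - 3))

/-- β₀⁵(λ,μ) = λ(2δ+2λ−1)(2δ+4λ−1)/((2δ−1)(2δ−3)(2δ−5)). -/
noncomputable def b05 (l m : ℝ) : ℝ :=
  (l * (2 * (m - l) + 2 * l - 1) * (2 * (m - l) + 4 * l - 1)) /
    ((2 * (m - l) - 1) * (2 * (m - l) - 3) * (2 * (m - l) - 5))

/-- β₁⁵(λ,μ) = −3(4λδ+2δ+4λ²−2λ−1)/((2δ−5)(4δ−4)). -/
noncomputable def b15 (l m : ℝ) : ℝ :=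
  -(3 * (4 * l * (m - l) + 2 * (m - l) + 4 * l ^ 2 - 2 * l - 1)) /
    ((2 * (m - l) - 5) * (4 * (m - l) - 4))

/-- β₂⁵(λ,μ) = −(δ+4λδ−2λ+4λ²)/(2(δ−2)). -/
noncomputable def b25 (l m : ℝ) : ℝ :=
  -((m - l) + 4 * l * (m - l) - 2 * l + 4 * l ^ 2) / (2 * ((m - l) - 2))

/-!
Once the δ-dependent factors are cleared, the equations only involve A(x) = x(2x + 2δ − 1),
B(x) = 2δ + 4x − 1 and C(x) = 2A(x) + 2δ − 1, the numerators of β₀⁴, β₁⁴ and β₁⁵ (`b04Num`,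
`b14Num`, `b15Num`), and β₀⁵ has numerator A·B. The β₀⁴, β₀⁵ and β₁⁴ equations give τ₁B(λ)² =
τ₅B(ρ)². Since B² = 8A + (2δ − 1)², the combination 4C − B² is the constant (2δ − 1)(5 − 2δ),
which is nonzero for nonresonant δ; so the β₁⁵ equation forces τ₁ = τ₅, hence C(λ) = C(ρ), i.e.
A(λ) = A(ρ). Finally A(λ) − A(ρ) = (λ − ρ)(2λ + 2ρ + 2δ − 1).
-/

section Numerators

variable (d : ℝ)

def b04Num (x : ℝ) : ℝ := x * (2 * d + 2 * x - 1)

def b14Num (x : ℝ) : ℝ := 2 * d + 4 * x - 1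

def b15Num (x : ℝ) : ℝ := 4 * x * d + 2 * d + 4 * x ^ 2 - 2 * x - 1

variable {d}

theorem b04_eq {l m : ℝ} (h : m - l = d) :
    b04 l m = -3 / ((2 * d - 1) * (2 * d - 4)) * b04Num d l := by
  subst h; unfold b04 b04Num; ring

theorem b05_eq {l m : ℝ} (h : m - l = d) :
    b05 l m =
      1 / ((2 * d - 1) * (2 * d - 3) * (2 * d - 5)) * (b04Num d l * b14Num d l) := by
  subst h; unfold b05 b04Num b14Num; ring

theorem b14_eq {l m : ℝ} (h : m - l = d) :
    b14 l m = -1 / (2 * (2 * d - 3)) * b14Num d l := by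
  subst h; unfold b14 b14Num; ring

theorem b15_eq {l m : ℝ} (h : m - l = d) :
    b15 l m = -3 / ((2 * d - 5) * (4 * d - 4)) * b15Num d l := by
  subst h; unfold b15 b15Num; ring

theorem b15Num_eq (x : ℝ) : b15Num d x = 2 * b04Num d x + (2 * d - 1) := by
  unfold b15Num b04Num; ring

theorem four_mul_b15Num_sub_b14Num_sq (x : ℝ) :
    4 * b15Num d x - b14Num d x ^ 2 = (2 * d - 1) * (5 - 2 * d) := by
  unfold b15Num b14Num; ring

theorem b04Num_eq_b04Num_iff {x y : ℝ} :
    b04Num d x = b04Num d y ↔ x = y ∨ x + y + d = 1 / 2 := by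
  have hfactor : b04Num d x - b04Num d y = 2 * ((x - y) * (x + y + d - 1 / 2)) := by
    unfold b04Num; ring
  rw [← sub_eq_zero, hfactor, mul_eq_zero, mul_eq_zero, sub_eq_zero, sub_eq_zero]
  norm_num

end Numerators

theorem mul_eq_mul_of_mul_const_eq {c τ τ' p q : ℝ} (hc : c ≠ 0)
    (h : τ * (c * p) = τ' * (c * q)) : τ * p = τ' * q :=
  mul_left_cancel₀ hc (by linear_combination h)

section Intertwining

variable {d l r τ0 τ1 τ4 τ5 : ℝ}

theorem b14Num_sq_intertwined (hτ0 : τ0 ≠ 0) (hτ4 : τ4 ≠ 0) (hA : b04Num d l ≠ 0)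
    (e04 : τ0 * b04Num d l = τ4 * b04Num d r)
    (e05 : τ0 * (b04Num d l * b14Num d l) = τ5 * (b04Num d r * b14Num d r))
    (e14 : τ1 * b14Num d l = τ4 * b14Num d r) :
    τ1 * b14Num d l ^ 2 = τ5 * b14Num d r ^ 2 := by
  have hAr : b04Num d r ≠ 0 := fun h ↦ mul_ne_zero hτ0 hA (by rw [e04, h, mul_zero])
  have e05' : τ4 * b14Num d l = τ5 * b14Num d r :=
    mul_left_cancel₀ hAr (by linear_combination e05 - b14Num d l * e04)
  exact mul_left_cancel₀ hτ4
    (by linear_combination τ4 * b14Num d l * e14 + τ4 * b14Num d r * e05')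

theorem b04Num_eq_of_intertwined (hd : (2 * d - 1) * (5 - 2 * d) ≠ 0)
    (hτ0 : τ0 ≠ 0) (hτ1 : τ1 ≠ 0) (hτ4 : τ4 ≠ 0)
    (e04 : τ0 * b04Num d l = τ4 * b04Num d r)
    (e05 : τ0 * (b04Num d l * b14Num d l) = τ5 * (b04Num d r * b14Num d r))
    (e14 : τ1 * b14Num d l = τ4 * b14Num d r)
    (e15 : τ1 * b15Num d l = τ5 * b15Num d r) :
    b04Num d l = b04Num d r := by
  by_cases hA : b04Num d l = 0
  · rw [hA, mul_zero, zero_eq_mul] at e04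
    exact hA.trans (e04.resolve_left hτ4).symm
  have hB := b14Num_sq_intertwined hτ0 hτ4 hA e04 e05 e14
  have hτ : τ1 = τ5 := by
    refine mul_right_cancel₀ hd ?_
    linear_combination 4 * e15 - hB - τ1 * four_mul_b15Num_sub_b14Num_sq (d := d) l +
      τ5 * four_mul_b15Num_sub_b14Num_sq (d := d) r
  subst hτ
  have hC := mul_left_cancel₀ hτ1 e15
  rw [b15Num_eq, b15Num_eq] at hC
  linear_combination hC / 2

end Intertwining

theorem stmt0_general (lam mu rho nu δ : ℝ)
    (hδ1 : mu - lam = δ) (hδ2 : nu - rho = δ)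
    (h1 : δ ≠ 1 / 2) (h2 : δ ≠ 1) (h3 : δ ≠ 3 / 2) (h4 : δ ≠ 2) (h5 : δ ≠ 5 / 2)
    (τ0 τ1 τ4 τ5 : ℝ)
    (hτ0 : τ0 ≠ 0) (hτ1 : τ1 ≠ 0) (hτ4 : τ4 ≠ 0)
    (e2 : τ0 * b04 lam mu = τ4 * b04 rho nu)
    (e3 : τ0 * b05 lam mu = τ5 * b05 rho nu)
    (e4 : τ1 * b14 lam mu = τ4 * b14 rho nu)
    (e5 : τ1 * b15 lam mu = τ5 * b15 rho nu) :
    lam = rho ∨ rho + mu = 1 / 2 := by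
  have hd1 : 2 * δ - 1 ≠ 0 := by contrapose! h1; linarith
  have hd2 : 4 * δ - 4 ≠ 0 := by contrapose! h2; linarith
  have hd3 : 2 * δ - 3 ≠ 0 := by contrapose! h3; linarith
  have hd4 : 2 * δ - 4 ≠ 0 := by contrapose! h4; linarith
  have hd5 : 2 * δ - 5 ≠ 0 := by contrapose! h5; linarith
  rw [b04_eq hδ1, b04_eq hδ2] at e2
  rw [b05_eq hδ1, b05_eq hδ2] at e3
  rw [b14_eq hδ1, b14_eq hδ2] at e4
  rw [b15_eq hδ1, b15_eq hδ2] at e5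
  have hA := b04Num_eq_of_intertwined (mul_ne_zero hd1 (by contrapose! hd5; linarith))
    hτ0 hτ1 hτ4
    (mul_eq_mul_of_mul_const_eq (div_ne_zero (by norm_num) (mul_ne_zero hd1 hd4)) e2)
    (mul_eq_mul_of_mul_const_eq
      (div_ne_zero one_ne_zero (mul_ne_zero (mul_ne_zero hd1 hd3) hd5)) e3)
    (mul_eq_mul_of_mul_const_eq (div_ne_zero (by norm_num) (mul_ne_zero two_ne_zero hd3)) e4)
    (mul_eq_mul_of_mul_const_eq (div_ne_zero (by norm_num) (mul_ne_zero hd5 hd2)) e5)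
  rcases b04Num_eq_b04Num_iff.mp hA with h | h
  · exact .inl h
  · exact .inr (by linarith)

/-- For nonresonant δ and k = 5/2, solvability of the six intertwining
equations forces λ = ρ or ρ + μ = 1/2 (Theorem 3.1 (ii)). -/
theorem stmt0 (lam mu rho nu δ : ℝ)
    (hδ1 : mu - lam = δ) (hδ2 : nu - rho = δ)
    (h1 : δ ≠ 1 / 2) (h2 : δ ≠ 1) (h3 : δ ≠ 3 / 2) (h4 : δ ≠ 2) (h5 : δ ≠ 5 / 2)
    (τ0 τ1 τ2 τ3 τ4 τ5 : ℝ)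
    (hτ0 : τ0 ≠ 0) (hτ1 : τ1 ≠ 0) (hτ2 : τ2 ≠ 0)
    (hτ3 : τ3 ≠ 0) (hτ4 : τ4 ≠ 0) (hτ5 : τ5 ≠ 0)
    (e1 : τ0 * b03 lam mu = τ3 * b03 rho nu)
    (e2 : τ0 * b04 lam mu = τ4 * b04 rho nu)
    (e3 : τ0 * b05 lam mu = τ5 * b05 rho nu)
    (e4 : τ1 * b14 lam mu = τ4 * b14 rho nu)
    (e5 : τ1 * b15 lam mu = τ5 * b15 rho nu)
    (e6 : τ2 * b25 lam mu = τ5 * b25 rho nu) :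
    lam = rho ∨ rho + mu = 1 / 2 :=
  stmt0_general lam mu rho nu δ hδ1 hδ2 h1 h2 h3 h4 h5 τ0 τ1 τ4 τ5 hτ0 hτ1 hτ4 e2 e3 e4 e5
end

section
/- Let λ, μ be real numbers with δ = μ − λ ∉ {1/2, 1, 3/2, 2, 5/2}, and set ρ = 1/2 − μ and ν = 1/2 − λ (the adjoint weights, which satisfy ν − ρ = δ). Then β₀³(ρ,ν) = β₀³(λ,μ), β₀⁴(ρ,ν) = β₀⁴(λ,μ), β₁⁴(ρ,ν) = −β₁⁴(λ,μ), β₀⁵(ρ,ν) = −β₀⁵(λ,μ), β₁⁵(ρ,ν) = β₁⁵(λ,μ), and β₂⁵(ρ,ν) = β₂⁵(λ,μ). Consequently the nonzero numbers τ₀ = 1, τ₁ = −1, τ₂ = −1, τ₃ = 1, τ₄ = 1, τ₅ = −1 satisfy all six intertwining equations τ₀·β₀³(λ,μ) = τ₃·β₀³(ρ,ν), τ₀·β₀⁴(λ,μ) = τ₄·β₀⁴(ρ,ν), τ₀·β₀⁵(λ,μ) = τ₅·β₀⁵(ρ,ν), τ₁·β₁⁴(λ,μ) = τ₄·β₁⁴(ρ,ν),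 τ₁·β₁⁵(λ,μ) = τ₅·β₁⁵(ρ,ν), τ₂·β₂⁵(λ,μ) = τ₅·β₂⁵(ρ,ν). (This expresses that the passage to the adjoint module D^k_{1/2−μ,1/2−λ} always gives an isomorphism of K(1)-modules, consistently with Theorem 3.1.) -/
theorem adjoint_sub (l m : ℝ) : (1 / 2 - l) - (1 / 2 - m) = m - l := by ring

theorem b03_adjoint (l m : ℝ) : b03 (1 / 2 - m) (1 / 2 - l) = b03 l m := by
  rw [b03, b03, adjoint_sub]
  congr 1
  ring

theorem b04_adjoint (l m : ℝ) : b04 (1 / 2 - m) (1 / 2 - l) = b04 l m := by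
  rw [b04, b04, adjoint_sub]
  congr 1
  ring

theorem b14_adjoint (l m : ℝ) : b14 (1 / 2 - m) (1 / 2 - l) = -b14 l m := by
  rw [b14, b14, adjoint_sub, ← neg_div]
  congr 1
  ring

theorem b05_adjoint (l m : ℝ) : b05 (1 / 2 - m) (1 / 2 - l) = -b05 l m := by
  rw [b05, b05, adjoint_sub, ← neg_div]
  congr 1
  ring

theorem b15_adjoint (l m : ℝ) : b15 (1 / 2 - m) (1 / 2 - l) = b15 l m := by
  rw [b15, b15, adjoint_sub]
  congr 1
  ring

theorem b25_adjoint (l m : ℝ) : b25 (1 / 2 - m) (1 / 2 - l) = b25 l m := by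
  rw [b25, b25, adjoint_sub]
  congr 1
  ring

theorem stmt1_general (lam mu rho nu : ℝ)
    (hρ : rho = 1 / 2 - mu) (hν : nu = 1 / 2 - lam) :
    b03 rho nu = b03 lam mu ∧
    b04 rho nu = b04 lam mu ∧
    b14 rho nu = -b14 lam mu ∧
    b05 rho nu = -b05 lam mu ∧
    b15 rho nu = b15 lam mu ∧
    b25 rho nu = b25 lam mu ∧
    (1 : ℝ) * b03 lam mu = 1 * b03 rho nu ∧
    (1 : ℝ) * b04 lam mu = 1 * b04 rho nu ∧
    (1 : ℝ) * b05 lam mu = (-1) * b05 rho nu ∧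
    (-1 : ℝ) * b14 lam mu = 1 * b14 rho nu ∧
    (-1 : ℝ) * b15 lam mu = (-1) * b15 rho nu ∧
    (-1 : ℝ) * b25 lam mu = (-1) * b25 rho nu := by
  subst hρ hν
  have h03 := b03_adjoint lam mu
  have h04 := b04_adjoint lam mu
  have h14 := b14_adjoint lam mu
  have h05 := b05_adjoint lam mu
  have h15 := b15_adjoint lam mu
  have h25 := b25_adjoint lam mu
  refine ⟨h03, h04, h14, h05, h15, h25, ?_, ?_, ?_, ?_, ?_, ?_⟩ <;> linarith

/-- Passage to the adjoint weights ρ = 1/2 − μ, ν = 1/2 − λ preserves (up to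
explicit signs) the coefficients β, so that τ = (1,−1,−1,1,1,−1) solves the six
intertwining equations: the adjoint module is always isomorphic to the original. -/
theorem stmt1 (lam mu rho nu δ : ℝ)
    (hδ : mu - lam = δ)
    (h1 : δ ≠ 1 / 2) (h2 : δ ≠ 1) (h3 : δ ≠ 3 / 2) (h4 : δ ≠ 2) (h5 : δ ≠ 5 / 2)
    (hρ : rho = 1 / 2 - mu) (hν : nu = 1 / 2 - lam) :
    b03 rho nu = b03 lam mu ∧
    b04 rho nu = b04 lam mu ∧
    b14 rho nu = -b14 lam mu ∧
    b05 rho nu = -b05 lam mu ∧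
    b15 rho nu = b15 lam mu ∧
    b25 rho nu = b25 lam mu ∧
    (1 : ℝ) * b03 lam mu = 1 * b03 rho nu ∧
    (1 : ℝ) * b04 lam mu = 1 * b04 rho nu ∧
    (1 : ℝ) * b05 lam mu = (-1) * b05 rho nu ∧
    (-1 : ℝ) * b14 lam mu = 1 * b14 rho nu ∧
    (-1 : ℝ) * b15 lam mu = (-1) * b15 rho nu ∧
    (-1 : ℝ) * b25 lam mu = (-1) * b25 rho nu :=
  stmt1_general lam mu rho nu hρ hν
end

section
/- Let λ, ρ be real numbers with λ(2λ+3) ≠ 0. Suppose there exist nonzero real numbers τ₀, τ₁, τ₃, τ₄ such that τ₀·λ(2λ+3) = τ₃·ρ(2ρ+3), τ₁·(4λ+3) = τ₄·(4ρ+3), τ₃ = τ₄, and τ₀·λ(2λ+3)·(2λ²+3λ+1)·(ρ² + (3/2)ρ + 1) = τ₄·ρ(2ρ+3)·(2ρ²+3ρ+1)·(λ² + (3/2)λ + 1). Then λ = ρ or λ + ρ = −3/2 (equivalently ρ = 1/2 − μ with μ = λ + 2, so that D²_{ρ,ρ+2} is the adjoint module of D²_{λ,λ+2}). -/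
/-!
Write `f x = 2x² + 3x + 1` and `g x = x² + (3/2)x + 1 = (f x + 1)/2`. Dividing the fourth equation by
the first (the common factor `τ₄ ρ(2ρ+3)` is nonzero since `τ₀ λ(2λ+3) ≠ 0`) leaves
`f λ g ρ = f ρ g λ`, and `f λ g ρ - f ρ g λ = (f λ - f ρ)/2 = (λ - ρ)(λ + ρ + 3/2)`.
-/

theorem eq_or_add_eq_neg_three_halves_of_cross_eq {K : Type*} [Field K] [CharZero K] {a b : K}
    (h : (2 * a ^ 2 + 3 * a + 1) * (b ^ 2 + (3 / 2) * b + 1)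
      = (2 * b ^ 2 + 3 * b + 1) * (a ^ 2 + (3 / 2) * a + 1)) :
    a = b ∨ a + b = -(3 / 2) := by
  have hfactor : (a - b) * (a + b + 3 / 2) = 0 := by linear_combination h
  rcases mul_eq_zero.mp hfactor with hab | hab
  · exact Or.inl (sub_eq_zero.mp hab)
  · exact Or.inr (by linear_combination hab)

theorem stmt3_general (lam rho : ℝ) (hlam : lam * (2 * lam + 3) ≠ 0)
    (τ0 τ3 τ4 : ℝ)
    (hτ0 : τ0 ≠ 0) (hτ4 : τ4 ≠ 0)
    (e1 : τ0 * (lam * (2 * lam + 3)) = τ3 * (rho * (2 * rho + 3)))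
    (e3 : τ3 = τ4)
    (e4 : τ0 * (lam * (2 * lam + 3)) * (2 * lam ^ 2 + 3 * lam + 1) *
            (rho ^ 2 + (3 / 2) * rho + 1)
        = τ4 * (rho * (2 * rho + 3)) * (2 * rho ^ 2 + 3 * rho + 1) *
            (lam ^ 2 + (3 / 2) * lam + 1)) :
    lam = rho ∨ lam + rho = -(3 / 2) := by
  rw [e3] at e1
  have hrho : rho * (2 * rho + 3) ≠ 0 := by
    intro h
    rw [h, mul_zero] at e1
    exact mul_ne_zero hτ0 hlam e1
  apply eq_or_add_eq_neg_three_halves_of_cross_eq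
  apply mul_left_cancel₀ (mul_ne_zero hτ4 hrho)
  linear_combination e4 - (2 * lam ^ 2 + 3 * lam + 1) * (rho ^ 2 + (3 / 2) * rho + 1) * e1

/-- The resonant case δ = 2, order k = 2 (Theorem 3.1): the denominator-free
intertwining equations in terms of normal symbols force λ = ρ or
λ + ρ = −3/2, i.e. D²_{ρ,ρ+2} is the adjoint module of D²_{λ,λ+2}. -/
theorem stmt3 (lam rho : ℝ) (hlam : lam * (2 * lam + 3) ≠ 0)
    (τ0 τ1 τ3 τ4 : ℝ)
    (hτ0 : τ0 ≠ 0) (hτ1 : τ1 ≠ 0) (hτ3 : τ3 ≠ 0) (hτ4 : τ4 ≠ 0)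
    (e1 : τ0 * (lam * (2 * lam + 3)) = τ3 * (rho * (2 * rho + 3)))
    (e2 : τ1 * (4 * lam + 3) = τ4 * (4 * rho + 3))
    (e3 : τ3 = τ4)
    (e4 : τ0 * (lam * (2 * lam + 3)) * (2 * lam ^ 2 + 3 * lam + 1) *
            (rho ^ 2 + (3 / 2) * rho + 1)
        = τ4 * (rho * (2 * rho + 3)) * (2 * rho ^ 2 + 3 * rho + 1) *
            (lam ^ 2 + (3 / 2) * lam + 1)) :
    lam = rho ∨ lam + rho = -(3 / 2) :=
  stmt3_general lam rho hlam τ0 τ3 τ4 hτ0 hτ4 e1 e3 e4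
end

section
/- Let λ, μ, ρ, ν be real numbers with μ − λ = ν − ρ = δ and δ ∉ {1/2, 1, 3/2, 2}. Assume λ(2δ+2λ−1) ≠ 0, ρ(2δ+2ρ−1) ≠ 0, 2δ+4λ−1 ≠ 0 and 2δ+4ρ−1 ≠ 0. Then there exist nonzero real numbers τ₀, τ₁, τ₂, τ₃, τ₄ with τ₄ = τ₃ satisfying τ₀·β₀³(λ,μ) = τ₃·β₀³(ρ,ν), τ₀·β₀⁴(λ,μ) = τ₄·β₀⁴(ρ,ν) and τ₁·β₁⁴(λ,μ) = τ₄·β₁⁴(ρ,ν); explicitly one may take τ₃ = τ₄ = 1, τ₂ = 1, τ₀ = β₀⁴(ρ,ν)/β₀⁴(λ,μ) and τ₁ = β₁⁴(ρ,ν)/β₁⁴(λ,μ). (This is the generic-isomorphism step for order k = 2 in Theorem 3.1(i); it uses the proportionality β₀⁴(λ,μ) = β₀³(λ,μ)·3(2δ−2)/((2δ−1)(2δ−4)), whose factor depends only on δ.) -/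
/-!
For fixed `δ = μ - λ`, the coefficients `β₀³` and `β₀⁴` are multiples of the same expression
`λ(2δ + 2λ - 1)` by constants depending only on `δ`, so `β₀³(λ,μ) β₀⁴(ρ,ν) = β₀³(ρ,ν) β₀⁴(λ,μ)`
whenever `μ - λ = ν - ρ`. Hence the ratio `τ₀ = β₀⁴(ρ,ν)/β₀⁴(λ,μ)` that solves the `β₀⁴` equation
solves the `β₀³` equation as well.
-/

lemma b03_mul_b04_comm {l m r n : ℝ} (h : m - l = n - r) :
    b03 l m * b04 r n = b03 r n * b04 l m := by
  unfold b03 b04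
  rw [h]
  ring

lemma b04_ne_zero {l m : ℝ} (hl : l * (2 * (m - l) + 2 * l - 1) ≠ 0)
    (h1 : m - l ≠ 1 / 2) (h4 : m - l ≠ 2) : b04 l m ≠ 0 := by
  have hnum : 3 * l * (2 * (m - l) + 2 * l - 1) ≠ 0 := by
    rw [mul_assoc]; exact mul_ne_zero three_ne_zero hl
  have hden : (2 * (m - l) - 1) * (2 * (m - l) - 4) ≠ 0 :=
    mul_ne_zero (by contrapose! h1; linarith) (by contrapose! h4; linarith)
  exact div_ne_zero (neg_ne_zero.mpr hnum) hden

lemma b14_ne_zero {l m : ℝ} (hl : 2 * (m - l) + 4 * l - 1 ≠ 0) (h3 : m - l ≠ 3 / 2) :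
    b14 l m ≠ 0 :=
  div_ne_zero (neg_ne_zero.mpr hl) (mul_ne_zero two_ne_zero (by contrapose! h3; linarith))

theorem stmt4_general (lam mu rho nu δ : ℝ)
    (hδ1 : mu - lam = δ) (hδ2 : nu - rho = δ)
    (h1 : δ ≠ 1 / 2) (h3 : δ ≠ 3 / 2) (h4 : δ ≠ 2)
    (hlam : lam * (2 * δ + 2 * lam - 1) ≠ 0)
    (hrho : rho * (2 * δ + 2 * rho - 1) ≠ 0)
    (hlam' : 2 * δ + 4 * lam - 1 ≠ 0)
    (hrho' : 2 * δ + 4 * rho - 1 ≠ 0) :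
    ∃ τ0 τ1 τ2 τ3 τ4 : ℝ,
      τ0 ≠ 0 ∧ τ1 ≠ 0 ∧ τ2 ≠ 0 ∧ τ3 ≠ 0 ∧ τ4 ≠ 0 ∧ τ4 = τ3 ∧
      τ0 * b03 lam mu = τ3 * b03 rho nu ∧
      τ0 * b04 lam mu = τ4 * b04 rho nu ∧
      τ1 * b14 lam mu = τ4 * b14 rho nu ∧
      τ3 = 1 ∧ τ4 = 1 ∧ τ2 = 1 ∧
      τ0 = b04 rho nu / b04 lam mu ∧
      τ1 = b14 rho nu / b14 lam mu := by
  subst hδ1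
  have hb04l := b04_ne_zero hlam h1 h4
  have hb04r := b04_ne_zero (hδ2 ▸ hrho) (hδ2 ▸ h1) (hδ2 ▸ h4)
  have hb14l := b14_ne_zero hlam' h3
  have hb14r := b14_ne_zero (hδ2 ▸ hrho') (hδ2 ▸ h3)
  refine ⟨b04 rho nu / b04 lam mu, b14 rho nu / b14 lam mu, 1, 1, 1,
    div_ne_zero hb04r hb04l, div_ne_zero hb14r hb14l, one_ne_zero, one_ne_zero,
    one_ne_zero, rfl, ?_, ?_, ?_, rfl, rfl, rfl, rfl, rfl⟩
  · rw [one_mul, div_mul_eq_mul_div, div_eq_iff hb04l, mul_comm,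
      b03_mul_b04_comm hδ2.symm]
  · rw [div_mul_cancel₀ _ hb04l, one_mul]
  · rw [div_mul_cancel₀ _ hb14l, one_mul]

/-- The generic-isomorphism step for order k = 2 in Theorem 3.1 (i): for
nonresonant generic weights, the intertwining equations with τ₄ = τ₃ admit a
nonzero solution, explicitly τ₃ = τ₄ = τ₂ = 1, τ₀ = β₀⁴(ρ,ν)/β₀⁴(λ,μ),
τ₁ = β₁⁴(ρ,ν)/β₁⁴(λ,μ). -/
theorem stmt4 (lam mu rho nu δ : ℝ)
    (hδ1 : mu - lam = δ) (hδ2 : nu - rho = δ)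
    (h1 : δ ≠ 1 / 2) (h2 : δ ≠ 1) (h3 : δ ≠ 3 / 2) (h4 : δ ≠ 2)
    (hlam : lam * (2 * δ + 2 * lam - 1) ≠ 0)
    (hrho : rho * (2 * δ + 2 * rho - 1) ≠ 0)
    (hlam' : 2 * δ + 4 * lam - 1 ≠ 0)
    (hrho' : 2 * δ + 4 * rho - 1 ≠ 0) :
    ∃ τ0 τ1 τ2 τ3 τ4 : ℝ,
      τ0 ≠ 0 ∧ τ1 ≠ 0 ∧ τ2 ≠ 0 ∧ τ3 ≠ 0 ∧ τ4 ≠ 0 ∧ τ4 = τ3 ∧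
      τ0 * b03 lam mu = τ3 * b03 rho nu ∧
      τ0 * b04 lam mu = τ4 * b04 rho nu ∧
      τ1 * b14 lam mu = τ4 * b14 rho nu ∧
      τ3 = 1 ∧ τ4 = 1 ∧ τ2 = 1 ∧
      τ0 = b04 rho nu / b04 lam mu ∧
      τ1 = b14 rho nu / b14 lam mu :=
  stmt4_general lam mu rho nu δ hδ1 hδ2 h1 h3 h4 hlam hrho hlam' hrho'
end

section
/- Let λ, δ be real numbers such that δ is nonresonant, i.e. 2δ is not a positive integer. Fix natural numbers j ≤ N. Then there exists a unique family of real numbers (ξ_i)_{j ≤ i ≤ N} with ξ_j = 1 satisfying, for every i with j < i ≤ N: ((i−j)/2)·ξ_i = (i/2)·ξ_{i−1} if i and j are both even; ((i−j)/2)·ξ_i = (2λ + ⌊i/2⌋)·ξ_{i−1} if i and j are both odd; (i − 2δ − ⌊(i−j)/2⌋)·ξ_i = (2λ + ⌊i/2⌋)·ξ_{i−1} if i is odd and j is even; and (i − 2δ − ⌊(i−j)/2⌋)·ξ_i = (i/2)·ξ_{i−1} if i is even and j is odd. (This recurrence system expresses the osp(1|2)-equivariance of the symbol map for differential operators on weighted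 densities over S^{1|1} with δ = μ − λ, and its unique solvability is the key step in the proof that the equivariant symbol map exists and is unique.) -/
/-!
All four cases of the system have the shape `c i * ξ i = r i * ξ (i - 1)`, a first-order linear
recurrence, so it is uniquely solved by `ξ i = ∏_{j < k ≤ i} r k / c k` as soon as no leading
coefficient `c i` (`j < i`) vanishes. When `i ≡ j [MOD 2]` that coefficient is `(i - j) / 2 ≠ 0`;
otherwise it is `m - 2δ` with `m = i - ⌊(i - j) / 2⌋ > 0`, nonzero exactly by nonresonance.
-/

open Finset

section FirstOrderRecurrence

variable {K : Type*} [Field K] (c r : ℕ → K) (j : ℕ)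

def recurrenceSolution (i : ℕ) : K :=
  ∏ k ∈ Ioc j i, r k / c k

@[simp]
theorem recurrenceSolution_self : recurrenceSolution c r j j = 1 := by
  simp [recurrenceSolution]

theorem mul_recurrenceSolution {i : ℕ} (hji : j < i) (hc : c i ≠ 0) :
    c i * recurrenceSolution c r j i = r i * recurrenceSolution c r j (i - 1) := by
  obtain ⟨n, rfl⟩ : ∃ n, i = n + 1 := ⟨i - 1, by omega⟩
  rw [recurrenceSolution, recurrenceSolution, prod_Ioc_succ_top (by omega), Nat.add_sub_cancel]
  field_simp

theorem eq_recurrenceSolution {N : ℕ} (hc : ∀ i, j < i → i ≤ N → c i ≠ 0) {f : ℕ → K}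
    (hfj : f j = 1) (hf : ∀ i, j < i → i ≤ N → c i * f i = r i * f (i - 1)) :
    ∀ i, j ≤ i → i ≤ N → f i = recurrenceSolution c r j i := by
  intro i hji
  induction i, hji using Nat.le_induction with
  | base => exact fun _ => by rw [hfj, recurrenceSolution_self]
  | succ n hjn ih =>
    intro hn
    have hcn := hc (n + 1) (by omega) hn
    refine mul_left_cancel₀ hcn ?_
    rw [hf _ (by omega) hn, mul_recurrenceSolution c r j (by omega) hcn, Nat.add_sub_cancel,
      ih (by omega)]

end FirstOrderRecurrence

section OspRecurrence

variable (lam δ : ℝ) (j : ℕ)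

noncomputable def ospLeadCoeff (i : ℕ) : ℝ :=
  if i % 2 = j % 2 then ((i : ℝ) - j) / 2 else (i : ℝ) - 2 * δ - ((i - j) / 2 : ℕ)

noncomputable def ospTrailCoeff (i : ℕ) : ℝ :=
  if i % 2 = 0 then (i : ℝ) / 2 else 2 * lam + (i / 2 : ℕ)

def OspRecurrenceAt (ξ : ℕ → ℝ) (i : ℕ) : Prop :=
  (i % 2 = 0 ∧ j % 2 = 0 →
      (((i : ℝ) - j) / 2) * ξ i = ((i : ℝ) / 2) * ξ (i - 1)) ∧
  (i % 2 = 1 ∧ j % 2 = 1 →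
      (((i : ℝ) - j) / 2) * ξ i = (2 * lam + (i / 2 : ℕ)) * ξ (i - 1)) ∧
  (i % 2 = 1 ∧ j % 2 = 0 →
      ((i : ℝ) - 2 * δ - ((i - j) / 2 : ℕ)) * ξ i = (2 * lam + (i / 2 : ℕ)) * ξ (i - 1)) ∧
  (i % 2 = 0 ∧ j % 2 = 1 →
      ((i : ℝ) - 2 * δ - ((i - j) / 2 : ℕ)) * ξ i = ((i : ℝ) / 2) * ξ (i - 1))

theorem ospRecurrenceAt_iff (ξ : ℕ → ℝ) (i : ℕ) :
    OspRecurrenceAt lam δ j ξ i ↔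
      ospLeadCoeff δ j i * ξ i = ospTrailCoeff lam i * ξ (i - 1) := by
  rcases Nat.mod_two_eq_zero_or_one i with hi | hi <;>
    rcases Nat.mod_two_eq_zero_or_one j with hj | hj <;>
    simp [OspRecurrenceAt, ospLeadCoeff, ospTrailCoeff, hi, hj]

theorem ospLeadCoeff_ne_zero (hres : ∀ m : ℕ, 0 < m → 2 * δ ≠ (m : ℝ)) {i : ℕ} (hji : j < i) :
    ospLeadCoeff δ j i ≠ 0 := by
  unfold ospLeadCoeff
  split_ifs
  · have hji' : (j : ℝ) < i := by exact_mod_cast hji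
    exact div_ne_zero (sub_ne_zero.mpr hji'.ne') two_ne_zero
  · have hcast : (i : ℝ) - 2 * δ - ((i - j) / 2 : ℕ) = ((i - (i - j) / 2 : ℕ) : ℝ) - 2 * δ := by
      rw [Nat.cast_sub (by omega)]
      ring
    rw [hcast, sub_ne_zero]
    exact (hres _ (by omega)).symm

end OspRecurrence

theorem stmt5_general (lam δ : ℝ) (hres : ∀ m : ℕ, 0 < m → 2 * δ ≠ (m : ℝ))
    (j N : ℕ) :
    ∃ ξ : ℕ → ℝ,
      (ξ j = 1 ∧
        ∀ i : ℕ, j < i → i ≤ N →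
          ((i % 2 = 0 ∧ j % 2 = 0 →
              (((i : ℝ) - j) / 2) * ξ i = ((i : ℝ) / 2) * ξ (i - 1)) ∧
           (i % 2 = 1 ∧ j % 2 = 1 →
              (((i : ℝ) - j) / 2) * ξ i = (2 * lam + (i / 2 : ℕ)) * ξ (i - 1)) ∧
           (i % 2 = 1 ∧ j % 2 = 0 →
              ((i : ℝ) - 2 * δ - ((i - j) / 2 : ℕ)) * ξ i
                = (2 * lam + (i / 2 : ℕ)) * ξ (i - 1)) ∧
           (i % 2 = 0 ∧ j % 2 = 1 →
              ((i : ℝ) - 2 * δ - ((i - j) / 2 : ℕ)) * ξ i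
                = ((i : ℝ) / 2) * ξ (i - 1)))) ∧
      ∀ ξ' : ℕ → ℝ,
        (ξ' j = 1 ∧
          ∀ i : ℕ, j < i → i ≤ N →
            ((i % 2 = 0 ∧ j % 2 = 0 →
                (((i : ℝ) - j) / 2) * ξ' i = ((i : ℝ) / 2) * ξ' (i - 1)) ∧
             (i % 2 = 1 ∧ j % 2 = 1 →
                (((i : ℝ) - j) / 2) * ξ' i = (2 * lam + (i / 2 : ℕ)) * ξ' (i - 1)) ∧
             (i % 2 = 1 ∧ j % 2 = 0 →
                ((i : ℝ) - 2 * δ - ((i - j) / 2 : ℕ)) * ξ' i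
                  = (2 * lam + (i / 2 : ℕ)) * ξ' (i - 1)) ∧
             (i % 2 = 0 ∧ j % 2 = 1 →
                ((i : ℝ) - 2 * δ - ((i - j) / 2 : ℕ)) * ξ' i
                  = ((i : ℝ) / 2) * ξ' (i - 1)))) →
        ∀ i : ℕ, j ≤ i → i ≤ N → ξ' i = ξ i := by
  have hc : ∀ i, j < i → ospLeadCoeff δ j i ≠ 0 := fun _ => ospLeadCoeff_ne_zero δ j hres
  refine ⟨recurrenceSolution (ospLeadCoeff δ j) (ospTrailCoeff lam) j,
    ⟨recurrenceSolution_self _ _ j, fun i hji _ => ?_⟩, ?_⟩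
  · exact (ospRecurrenceAt_iff lam δ j _ i).mpr (mul_recurrenceSolution _ _ j hji (hc i hji))
  · rintro ξ' ⟨hξ'j, hξ'⟩
    exact eq_recurrenceSolution _ _ j (fun i hji _ => hc i hji) hξ'j
      fun i hji hiN => (ospRecurrenceAt_iff lam δ j ξ' i).mp (hξ' i hji hiN)

/-- For nonresonant δ (2δ not a positive integer), the linear recurrence system
coming from osp(1|2)-equivariance of the symbol map has a unique solution
(ξ_i)_{j ≤ i ≤ N} with the normalization ξ_j = 1. -/
theorem stmt5 (lam δ : ℝ) (hres : ∀ m : ℕ, 0 < m → 2 * δ ≠ (m : ℝ))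
    (j N : ℕ) (hjN : j ≤ N) :
    ∃ ξ : ℕ → ℝ,
      (ξ j = 1 ∧
        ∀ i : ℕ, j < i → i ≤ N →
          ((i % 2 = 0 ∧ j % 2 = 0 →
              (((i : ℝ) - j) / 2) * ξ i = ((i : ℝ) / 2) * ξ (i - 1)) ∧
           (i % 2 = 1 ∧ j % 2 = 1 →
              (((i : ℝ) - j) / 2) * ξ i = (2 * lam + (i / 2 : ℕ)) * ξ (i - 1)) ∧
           (i % 2 = 1 ∧ j % 2 = 0 →
              ((i : ℝ) - 2 * δ - ((i - j) / 2 : ℕ)) * ξ i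
                = (2 * lam + (i / 2 : ℕ)) * ξ (i - 1)) ∧
           (i % 2 = 0 ∧ j % 2 = 1 →
              ((i : ℝ) - 2 * δ - ((i - j) / 2 : ℕ)) * ξ i
                = ((i : ℝ) / 2) * ξ (i - 1)))) ∧
      ∀ ξ' : ℕ → ℝ,
        (ξ' j = 1 ∧
          ∀ i : ℕ, j < i → i ≤ N →
            ((i % 2 = 0 ∧ j % 2 = 0 →
                (((i : ℝ) - j) / 2) * ξ' i = ((i : ℝ) / 2) * ξ' (i - 1)) ∧
             (i % 2 = 1 ∧ j % 2 = 1 →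
                (((i : ℝ) - j) / 2) * ξ' i = (2 * lam + (i / 2 : ℕ)) * ξ' (i - 1)) ∧
             (i % 2 = 1 ∧ j % 2 = 0 →
                ((i : ℝ) - 2 * δ - ((i - j) / 2 : ℕ)) * ξ' i
                  = (2 * lam + (i / 2 : ℕ)) * ξ' (i - 1)) ∧
             (i % 2 = 0 ∧ j % 2 = 1 →
                ((i : ℝ) - 2 * δ - ((i - j) / 2 : ℕ)) * ξ' i
                  = ((i : ℝ) / 2) * ξ' (i - 1)))) →
        ∀ i : ℕ, j ≤ i → i ≤ N → ξ' i = ξ i :=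
  stmt5_general lam δ hres j N
end
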